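/- arXiv:1804.00749 — 7 statements merged into one kernel-verified Lean document; each statement's English description precedes it below -/
import Mathlib

section
/- If A1, A2, B1, B2 : Λ → {-1,1} are measurable functions on a probability space (Λ, μ), then |∫ A1 B1 dμ + ∫ A1 B2 dμ + ∫ A2 B1 dμ - ∫ A2 B2 dμ| ≤ 2. -/
open MeasureTheory

/-- CHSH inequality for measurable ±1-valued functions on a probability space. -/
theorem chsh_integral {Λ : Type*} [MeasurableSpace Λ] (μ : Measure Λ)
    [IsProbabilityMeasure μ]
    (A1 A2 B1 B2 : Λ → ℝ)
    (hA1m : Measurable A1) (hA2m : Measurable A2)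
    (hB1m : Measurable B1) (hB2m : Measurable B2)
    (hA1 : ∀ x, A1 x = -1 ∨ A1 x = 1) (hA2 : ∀ x, A2 x = -1 ∨ A2 x = 1)
    (hB1 : ∀ x, B1 x = -1 ∨ B1 x = 1) (hB2 : ∀ x, B2 x = -1 ∨ B2 x = 1) :
    |(∫ x, A1 x * B1 x ∂μ) + (∫ x, A1 x * B2 x ∂μ) +
      (∫ x, A2 x * B1 x ∂μ) - (∫ x, A2 x * B2 x ∂μ)| ≤ 2 := by
  have key : ∀ (f g : Λ → ℝ), Measurable f → Measurable g →
      (∀ x, f x = -1 ∨ f x = 1) → (∀ x, g x = -1 ∨ g x = 1) →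
      Integrable (fun x => f x * g x) μ := by
    intro f g hf hg hf1 hg1
    refine (integrable_const (1 : ℝ)).mono' (hf.mul hg).aestronglyMeasurable ?_
    filter_upwards with x
    rcases hf1 x with h | h <;> rcases hg1 x with h' | h' <;> simp [h, h']
  have i1 := key A1 B1 hA1m hB1m hA1 hB1
  have i2 := key A1 B2 hA1m hB2m hA1 hB2
  have i3 := key A2 B1 hA2m hB1m hA2 hB1
  have i4 := key A2 B2 hA2m hB2m hA2 hB2
  have i12 : Integrable (fun x => A1 x * B1 x + A1 x * B2 x) μ := i1.add i2
  have i123 : Integrable (fun x => A1 x * B1 x + A1 x * B2 x + A2 x * B1 x) μ := i12.add i3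
  rw [← integral_add i1 i2, ← integral_add i12 i3, ← integral_sub i123 i4]
  have hb : ∀ x, |A1 x * B1 x + A1 x * B2 x + A2 x * B1 x - A2 x * B2 x| ≤ 2 := by
    intro x
    rcases hA1 x with h1 | h1 <;> rcases hA2 x with h2 | h2 <;>
      rcases hB1 x with h3 | h3 <;> rcases hB2 x with h4 | h4 <;>
      simp [h1, h2, h3, h4] <;> norm_num
  calc |∫ x, (A1 x * B1 x + A1 x * B2 x + A2 x * B1 x - A2 x * B2 x) ∂μ|
      ≤ ∫ x, |A1 x * B1 x + A1 x * B2 x + A2 x * B1 x - A2 x * B2 x| ∂μ :=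
        by simpa using norm_integral_le_integral_norm (μ := μ) (fun x => A1 x * B1 x + A1 x * B2 x + A2 x * B1 x - A2 x * B2 x)
    _ ≤ ∫ _x, (2 : ℝ) ∂μ := by
        refine integral_mono_of_nonneg (Filter.Eventually.of_forall fun x => abs_nonneg _)
          (integrable_const 2) (Filter.Eventually.of_forall hb)
    _ = 2 := by simp
end

section
/- There exist a unit vector ψ ∈ ℂ²⊗ℂ² and Hermitian operators A1, A2 on the first factor and B1, B2 on the second factor, each with eigenvalues in {-1,1}, such that the CHSH expectation ⟨ψ|(A1⊗B1 + A1⊗B2 + A2⊗B1 − A2⊗B2)|ψ⟩ > 2. Consequently, no joint probability distribution on {-1,1}^4 can reproduce the four correlators ⟨ψ|Ai⊗Bj|ψ⟩ as its marginals. -/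
/-! The maximally entangled two-qubit state with `A₁ = Z`, `A₂ = X`, `B₁ = (Z + X)/√2`,
`B₂ = (Z - X)/√2` attains Tsirelson's value `2√2` of the CHSH expression. A joint distribution
of four `±1`-valued variables, on the other hand, averages the pointwise bound
`a₁ b₁ + a₁ b₂ + a₂ b₁ - a₂ b₂ ≤ 2` (Bell's inequality), so its correlators cannot agree with the
quantum ones. -/

open Matrix Kronecker

theorem spectrum_eq_neg_one_or_one_of_mul_self_eq_one {𝕜 A : Type*} [Field 𝕜] [Ring A]
    [Algebra 𝕜 A] {a : A} (ha : a * a = 1) : ∀ μ ∈ spectrum 𝕜 a, μ = -1 ∨ μ = 1 := by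
  nontriviality A using spectrum.of_subsingleton
  intro μ hμ
  have h : μ ^ 2 ∈ spectrum 𝕜 (1 : A) := by
    simpa [sq, ha] using spectrum.pow_mem_pow a 2 hμ
  rw [spectrum.one_eq, Set.mem_singleton_iff, sq, mul_self_eq_one_iff] at h
  exact h.symm

section Anticommute

variable {A : Type*} [Ring A] {a b : A}

theorem add_mul_self_of_anticommute (ha : a * a = 1) (hb : b * b = 1)
    (hab : a * b + b * a = 0) : (a + b) * (a + b) = 2 := by
  calc (a + b) * (a + b) = a * a + (a * b + b * a) + b * b := by noncomm_ring
    _ = 2 := by rw [ha, hb, hab, add_zero, one_add_one_eq_two]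

theorem sub_mul_self_of_anticommute (ha : a * a = 1) (hb : b * b = 1)
    (hab : a * b + b * a = 0) : (a - b) * (a - b) = 2 := by
  calc (a - b) * (a - b) = a * a - (a * b + b * a) + b * b := by noncomm_ring
    _ = 2 := by rw [ha, hb, hab, sub_zero, one_add_one_eq_two]

theorem inv_sqrt_two_smul_mul_self [Algebra ℝ A] (h : a * a = 2) :
    ((√2)⁻¹ • a) * ((√2)⁻¹ • a) = 1 := by
  rw [smul_mul_smul, h, ← mul_inv, Real.mul_self_sqrt zero_le_two, Algebra.smul_def,
    ← map_ofNat (algebraMap ℝ A) 2, ← map_mul, inv_mul_cancel₀ two_ne_zero, map_one]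

end Anticommute

noncomputable def correlator {m n : Type*} [Fintype m] [Fintype n]
    (ψ : EuclideanSpace ℂ (m × n)) (A : Matrix m m ℂ) (B : Matrix n n ℂ) : ℝ :=
  (dotProduct (star (ψ : m × n → ℂ)) ((A ⊗ₖ B).mulVec ψ)).re

theorem chsh_expectation_re_eq_correlator {m n : Type*} [Fintype m] [Fintype n]
    (ψ : EuclideanSpace ℂ (m × n)) (A₁ A₂ : Matrix m m ℂ) (B₁ B₂ : Matrix n n ℂ) :
    (dotProduct (star (ψ : m × n → ℂ))
        ((A₁ ⊗ₖ B₁ + A₁ ⊗ₖ B₂ + A₂ ⊗ₖ B₁ - A₂ ⊗ₖ B₂).mulVec ψ)).re =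
      correlator ψ A₁ B₁ + correlator ψ A₁ B₂ + correlator ψ A₂ B₁ - correlator ψ A₂ B₂ := by
  simp only [correlator, add_mulVec, sub_mulVec, dotProduct_add, dotProduct_sub,
    Complex.add_re, Complex.sub_re]

noncomputable def maxEntangled (ι : Type*) [Fintype ι] [DecidableEq ι] :
    EuclideanSpace ℂ (ι × ι) :=
  WithLp.toLp 2 fun x => if x.1 = x.2 then ((√(Fintype.card ι) : ℝ) : ℂ)⁻¹ else 0

section MaxEntangled

variable {ι : Type*} [Fintype ι] [DecidableEq ι]

theorem norm_maxEntangled [Nonempty ι] : ‖maxEntangled ι‖ = 1 := by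
  rw [EuclideanSpace.norm_eq]
  simp [maxEntangled, Fintype.sum_prod_type, apply_ite]

theorem correlator_maxEntangled (A B : Matrix ι ι ℂ) :
    correlator (maxEntangled ι) A B = (∑ i, ∑ j, A i j * B i j).re / Fintype.card ι := by
  have hc : (((√(Fintype.card ι) : ℝ) : ℂ)⁻¹) ^ 2 = (Fintype.card ι : ℂ)⁻¹ := by
    rw [inv_pow, ← Complex.ofReal_pow, Real.sq_sqrt (Nat.cast_nonneg _), Complex.ofReal_natCast]
  have h : dotProduct (star (maxEntangled ι : ι × ι → ℂ)) ((A ⊗ₖ B).mulVec (maxEntangled ι)) =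
      (∑ i, ∑ j, A i j * B i j) / Fintype.card ι := by
    simp only [dotProduct, mulVec, maxEntangled, kroneckerMap_apply, Fintype.sum_prod_type,
      Pi.star_apply, apply_ite, star_inv₀, RCLike.star_def, Complex.conj_ofReal, star_zero,
      mul_zero, ite_mul, zero_mul, Finset.sum_ite_eq, Finset.mem_univ, if_true,
      ← Finset.sum_mul, ← Finset.mul_sum]
    linear_combination (∑ i, ∑ j, A i j * B i j) * hc
  rw [correlator, h, Complex.div_natCast_re]

end MaxEntangled

def pauliX : Matrix (Fin 2) (Fin 2) ℂ := !![0, 1; 1, 0]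

def pauliZ : Matrix (Fin 2) (Fin 2) ℂ := !![1, 0; 0, -1]

theorem isHermitian_pauliX : pauliX.IsHermitian := by
  ext i j; fin_cases i <;> fin_cases j <;> simp [pauliX]

theorem isHermitian_pauliZ : pauliZ.IsHermitian := by
  ext i j; fin_cases i <;> fin_cases j <;> simp [pauliZ]

theorem pauliX_mul_self : pauliX * pauliX = 1 := by
  ext i j; fin_cases i <;> fin_cases j <;> simp [pauliX]

theorem pauliZ_mul_self : pauliZ * pauliZ = 1 := by
  ext i j; fin_cases i <;> fin_cases j <;> simp [pauliZ]

theorem pauliZ_mul_pauliX_add_pauliX_mul_pauliZ : pauliZ * pauliX + pauliX * pauliZ = 0 := by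
  ext i j; fin_cases i <;> fin_cases j <;> simp [pauliX, pauliZ]

noncomputable def tsirelsonB₁ : Matrix (Fin 2) (Fin 2) ℂ := (√2)⁻¹ • (pauliZ + pauliX)

noncomputable def tsirelsonB₂ : Matrix (Fin 2) (Fin 2) ℂ := (√2)⁻¹ • (pauliZ - pauliX)

theorem isHermitian_tsirelsonB₁ : tsirelsonB₁.IsHermitian :=
  (isHermitian_pauliZ.add isHermitian_pauliX).smul (IsSelfAdjoint.all _)

theorem isHermitian_tsirelsonB₂ : tsirelsonB₂.IsHermitian :=
  (isHermitian_pauliZ.sub isHermitian_pauliX).smul (IsSelfAdjoint.all _)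

theorem tsirelsonB₁_mul_self : tsirelsonB₁ * tsirelsonB₁ = 1 :=
  inv_sqrt_two_smul_mul_self <| add_mul_self_of_anticommute pauliZ_mul_self pauliX_mul_self
    pauliZ_mul_pauliX_add_pauliX_mul_pauliZ

theorem tsirelsonB₂_mul_self : tsirelsonB₂ * tsirelsonB₂ = 1 :=
  inv_sqrt_two_smul_mul_self <| sub_mul_self_of_anticommute pauliZ_mul_self pauliX_mul_self
    pauliZ_mul_pauliX_add_pauliX_mul_pauliZ

theorem chsh_correlator_maxEntangled_eq_two_mul_sqrt_two :
    correlator (maxEntangled (Fin 2)) pauliZ tsirelsonB₁ +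
        correlator (maxEntangled (Fin 2)) pauliZ tsirelsonB₂ +
        correlator (maxEntangled (Fin 2)) pauliX tsirelsonB₁ -
        correlator (maxEntangled (Fin 2)) pauliX tsirelsonB₂ = 2 * √2 := by
  simp [correlator_maxEntangled, Fin.sum_univ_two, pauliX, pauliZ, tsirelsonB₁, tsirelsonB₂]
  ring

theorem chsh_le_two_of_mem {a₁ a₂ b₁ b₂ : ℤ} (ha₁ : a₁ ∈ ({-1, 1} : Finset ℤ))
    (ha₂ : a₂ ∈ ({-1, 1} : Finset ℤ)) (hb₁ : b₁ ∈ ({-1, 1} : Finset ℤ))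
    (hb₂ : b₂ ∈ ({-1, 1} : Finset ℤ)) :
    (a₁ * b₁ + a₁ * b₂ + a₂ * b₁ - a₂ * b₂ : ℝ) ≤ 2 := by
  have hsq : ∀ x ∈ ({-1, 1} : Finset ℤ), (x : ℝ) ^ 2 = 1 := by
    intro x hx
    rcases Finset.mem_insert.1 hx with rfl | hx
    · norm_num
    · rw [Finset.mem_singleton.1 hx]; norm_num
  exact CHSH_inequality_of_comm _ _ _ _
    { A₀_inv := hsq _ ha₁, A₁_inv := hsq _ ha₂, B₀_inv := hsq _ hb₁, B₁_inv := hsq _ hb₂,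
      A₀_sa := star_trivial _, A₁_sa := star_trivial _, B₀_sa := star_trivial _,
      B₁_sa := star_trivial _, A₀B₀_commutes := mul_comm _ _, A₀B₁_commutes := mul_comm _ _,
      A₁B₀_commutes := mul_comm _ _, A₁B₁_commutes := mul_comm _ _ }

noncomputable def jointCorrelator (p : ℤ → ℤ → ℤ → ℤ → ℝ) (i j : ℤ) : ℝ :=
  ∑ a1 ∈ ({-1, 1} : Finset ℤ), ∑ a2 ∈ ({-1, 1} : Finset ℤ),
    ∑ b1 ∈ ({-1, 1} : Finset ℤ), ∑ b2 ∈ ({-1, 1} : Finset ℤ),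
      ((if i = 1 then a1 else a2) * (if j = 1 then b1 else b2) : ℝ) * p a1 a2 b1 b2

theorem chsh_jointCorrelator_le_two (p : ℤ → ℤ → ℤ → ℤ → ℝ)
    (hp : ∀ a1 ∈ ({-1, 1} : Finset ℤ), ∀ a2 ∈ ({-1, 1} : Finset ℤ),
      ∀ b1 ∈ ({-1, 1} : Finset ℤ), ∀ b2 ∈ ({-1, 1} : Finset ℤ), 0 ≤ p a1 a2 b1 b2)
    (hsum : ∑ a1 ∈ ({-1, 1} : Finset ℤ), ∑ a2 ∈ ({-1, 1} : Finset ℤ),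
      ∑ b1 ∈ ({-1, 1} : Finset ℤ), ∑ b2 ∈ ({-1, 1} : Finset ℤ), p a1 a2 b1 b2 = 1) :
    jointCorrelator p 1 1 + jointCorrelator p 1 2 + jointCorrelator p 2 1 -
      jointCorrelator p 2 2 ≤ 2 := by
  calc _ = ∑ a1 ∈ ({-1, 1} : Finset ℤ), ∑ a2 ∈ ({-1, 1} : Finset ℤ),
        ∑ b1 ∈ ({-1, 1} : Finset ℤ), ∑ b2 ∈ ({-1, 1} : Finset ℤ),
          (a1 * b1 + a1 * b2 + a2 * b1 - a2 * b2 : ℝ) * p a1 a2 b1 b2 := by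
        simp only [jointCorrelator, ← Finset.sum_add_distrib, ← Finset.sum_sub_distrib]
        norm_num [add_mul, sub_mul]
    _ ≤ ∑ a1 ∈ ({-1, 1} : Finset ℤ), ∑ a2 ∈ ({-1, 1} : Finset ℤ),
        ∑ b1 ∈ ({-1, 1} : Finset ℤ), ∑ b2 ∈ ({-1, 1} : Finset ℤ), 2 * p a1 a2 b1 b2 := by
        gcongr with a1 ha1 a2 ha2 b1 hb1 b2 hb2
        · exact hp a1 ha1 a2 ha2 b1 hb1 b2 hb2
        · exact chsh_le_two_of_mem ha1 ha2 hb1 hb2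
    _ = 2 := by simp only [← Finset.mul_sum, hsum, mul_one]

/-- there are a unit state and ±1-valued local Hermitian observables whose
CHSH expectation exceeds 2, and hence no joint distribution on {-1,1}^4 reproduces the
four correlators as its marginals. -/
theorem chsh_quantum_violation_no_joint :
    ∃ (ψ : EuclideanSpace ℂ (Fin 2 × Fin 2)) (A1 A2 B1 B2 : Matrix (Fin 2) (Fin 2) ℂ),
      ‖ψ‖ = 1 ∧
      A1.IsHermitian ∧ A2.IsHermitian ∧ B1.IsHermitian ∧ B2.IsHermitian ∧
      (∀ μ ∈ spectrum ℂ A1, μ = -1 ∨ μ = 1) ∧ (∀ μ ∈ spectrum ℂ A2, μ = -1 ∨ μ = 1) ∧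
      (∀ μ ∈ spectrum ℂ B1, μ = -1 ∨ μ = 1) ∧ (∀ μ ∈ spectrum ℂ B2, μ = -1 ∨ μ = 1) ∧
      (2 : ℝ) < (dotProduct (star (ψ : Fin 2 × Fin 2 → ℂ))
        ((A1 ⊗ₖ B1 + A1 ⊗ₖ B2 + A2 ⊗ₖ B1 - A2 ⊗ₖ B2).mulVec ψ)).re ∧
      ¬ ∃ p : ℤ → ℤ → ℤ → ℤ → ℝ,
        (∀ a1 ∈ ({-1, 1} : Finset ℤ), ∀ a2 ∈ ({-1, 1} : Finset ℤ),
          ∀ b1 ∈ ({-1, 1} : Finset ℤ), ∀ b2 ∈ ({-1, 1} : Finset ℤ), 0 ≤ p a1 a2 b1 b2) ∧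
        (∑ a1 ∈ ({-1, 1} : Finset ℤ), ∑ a2 ∈ ({-1, 1} : Finset ℤ),
          ∑ b1 ∈ ({-1, 1} : Finset ℤ), ∑ b2 ∈ ({-1, 1} : Finset ℤ), p a1 a2 b1 b2 = 1) ∧
        (∀ i ∈ ({1, 2} : Finset ℤ), ∀ j ∈ ({1, 2} : Finset ℤ),
          (∑ a1 ∈ ({-1, 1} : Finset ℤ), ∑ a2 ∈ ({-1, 1} : Finset ℤ),
            ∑ b1 ∈ ({-1, 1} : Finset ℤ), ∑ b2 ∈ ({-1, 1} : Finset ℤ),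
              ((if i = 1 then a1 else a2) * (if j = 1 then b1 else b2) : ℝ) * p a1 a2 b1 b2) =
            (dotProduct (star (ψ : Fin 2 × Fin 2 → ℂ))
              (((if i = 1 then A1 else A2) ⊗ₖ (if j = 1 then B1 else B2)).mulVec ψ)).re) := by
  have hviolation : 2 < 2 * √2 := by
    nlinarith [Real.one_lt_sqrt_two]
  refine ⟨maxEntangled (Fin 2), pauliZ, pauliX, tsirelsonB₁, tsirelsonB₂, norm_maxEntangled,
    isHermitian_pauliZ, isHermitian_pauliX, isHermitian_tsirelsonB₁, isHermitian_tsirelsonB₂,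
    spectrum_eq_neg_one_or_one_of_mul_self_eq_one pauliZ_mul_self,
    spectrum_eq_neg_one_or_one_of_mul_self_eq_one pauliX_mul_self,
    spectrum_eq_neg_one_or_one_of_mul_self_eq_one tsirelsonB₁_mul_self,
    spectrum_eq_neg_one_or_one_of_mul_self_eq_one tsirelsonB₂_mul_self, ?_, ?_⟩
  · rw [chsh_expectation_re_eq_correlator, chsh_correlator_maxEntangled_eq_two_mul_sqrt_two]
    exact hviolation
  · rintro ⟨p, hp, hsum, hcorr⟩
    have h11 : jointCorrelator p 1 1 = correlator _ pauliZ tsirelsonB₁ :=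
      hcorr 1 (by simp) 1 (by simp)
    have h12 : jointCorrelator p 1 2 = correlator _ pauliZ tsirelsonB₂ :=
      hcorr 1 (by simp) 2 (by simp)
    have h21 : jointCorrelator p 2 1 = correlator _ pauliX tsirelsonB₁ :=
      hcorr 2 (by simp) 1 (by simp)
    have h22 : jointCorrelator p 2 2 = correlator _ pauliX tsirelsonB₂ :=
      hcorr 2 (by simp) 2 (by simp)
    have hbell := chsh_jointCorrelator_le_two p hp hsum
    rw [h11, h12, h21, h22, chsh_correlator_maxEntangled_eq_two_mul_sqrt_two] at hbell
    linarith
end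

section
/- For any Hermitian operators A1, A2, B1, B2 with A_i² = I and B_j² = I on finite-dimensional Hilbert spaces, the operator norm of S = A1⊗B1 + A1⊗B2 + A2⊗B1 − A2⊗B2 is at most 2√2 (Tsirelson's bound). -/
open Matrix Kronecker

private lemma kronCT {m n : Type*} (X : Matrix m m ℂ) (Y : Matrix n n ℂ) :
    (X ⊗ₖ Y)ᴴ = Xᴴ ⊗ₖ Yᴴ := by
  ext i j
  simp [Matrix.conjTranspose_apply, Matrix.kroneckerMap_apply, mul_comm]

private lemma subKron {m n p q : Type*} (X Y : Matrix m n ℂ) (Z : Matrix p q ℂ) :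
    (X - Y) ⊗ₖ Z = X ⊗ₖ Z - Y ⊗ₖ Z := by
  ext i j
  simp [Matrix.kroneckerMap_apply, sub_mul]

private lemma kronSub {m n p q : Type*} (X : Matrix m n ℂ) (Y Z : Matrix p q ℂ) :
    X ⊗ₖ (Y - Z) = X ⊗ₖ Y - X ⊗ₖ Z := by
  ext i j
  simp [Matrix.kroneckerMap_apply, mul_sub]

private lemma norm_le_one_of_unitary {k : Type*} [Fintype k] [DecidableEq k]
    (U : Matrix k k ℂ) (h : Uᴴ * U = 1) : ‖Matrix.toEuclideanCLM (𝕜 := ℂ) U‖ ≤ 1 := by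
  have h2 : ‖Matrix.toEuclideanCLM (𝕜 := ℂ) U‖ * ‖Matrix.toEuclideanCLM (𝕜 := ℂ) U‖
      = ‖star (Matrix.toEuclideanCLM (𝕜 := ℂ) U) * Matrix.toEuclideanCLM (𝕜 := ℂ) U‖ :=
    (CStarRing.norm_star_mul_self).symm
  rw [← StarHomClass.map_star, ← _root_.map_mul] at h2
  rw [Matrix.star_eq_conjTranspose, h, _root_.map_one] at h2
  have h1 : ‖(1 : EuclideanSpace ℂ k →L[ℂ] EuclideanSpace ℂ k)‖ ≤ 1 := by
    rw [ContinuousLinearMap.one_def]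
    exact ContinuousLinearMap.norm_id_le
  nlinarith [norm_nonneg (Matrix.toEuclideanCLM (𝕜 := ℂ) U)]

set_option maxHeartbeats 1000000 in
/-- Tsirelson's bound. For Hermitian involutions A1, A2 on H_A and
B1, B2 on H_B, the operator norm of the CHSH operator is at most 2√2. -/

theorem tsirelson_bound {m n : Type*} [Fintype m] [DecidableEq m] [Fintype n] [DecidableEq n]
    (A1 A2 : Matrix m m ℂ) (B1 B2 : Matrix n n ℂ)
    (hA1 : A1.IsHermitian) (hA2 : A2.IsHermitian)
    (hB1 : B1.IsHermitian) (hB2 : B2.IsHermitian)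
    (hA1sq : A1 * A1 = 1) (hA2sq : A2 * A2 = 1)
    (hB1sq : B1 * B1 = 1) (hB2sq : B2 * B2 = 1) :
    ‖Matrix.toEuclideanCLM (𝕜 := ℂ)
        (A1 ⊗ₖ B1 + A1 ⊗ₖ B2 + A2 ⊗ₖ B1 - A2 ⊗ₖ B2)‖ ≤ 2 * Real.sqrt 2 := by
  set S : Matrix (m × n) (m × n) ℂ := A1 ⊗ₖ B1 + A1 ⊗ₖ B2 + A2 ⊗ₖ B1 - A2 ⊗ₖ B2 with hS
  set f := Matrix.toEuclideanCLM (𝕜 := ℂ) (n := m × n)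
  -- S is Hermitian
  have hSstar : star S = S := by
    rw [Matrix.star_eq_conjTranspose, hS]
    simp only [Matrix.conjTranspose_sub, Matrix.conjTranspose_add, kronCT,
      hA1.eq, hA2.eq, hB1.eq, hB2.eq]
  -- the key algebraic identity
  set CA : Matrix m m ℂ := A2 * A1 - A1 * A2 with hCA
  set CB : Matrix n n ℂ := B1 * B2 - B2 * B1 with hCB
  have key : S * S = ((1 + 1 + 1 + 1 : Matrix (m × n) (m × n) ℂ)) + CA ⊗ₖ CB := by
    rw [hS, hCA, hCB]
    simp only [add_mul, mul_add, sub_mul, mul_sub, ← Matrix.mul_kronecker_mul,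
      hA1sq, hA2sq, hB1sq, hB2sq, subKron, kronSub, Matrix.one_kronecker_one]
    abel
  -- unit norms of the four basic unitaries
  have hu : ∀ (X : Matrix m m ℂ), Xᴴ = X → X * X = 1 →
      ‖Matrix.toEuclideanCLM (𝕜 := ℂ) (X ⊗ₖ (1 : Matrix n n ℂ))‖ ≤ 1 := by
    intro X hX hXsq
    refine norm_le_one_of_unitary _ ?_
    rw [kronCT, hX, Matrix.conjTranspose_one, ← Matrix.mul_kronecker_mul, hXsq, one_mul,
      Matrix.one_kronecker_one]
  have hv : ∀ (Y : Matrix n n ℂ), Yᴴ = Y → Y * Y = 1 →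
      ‖Matrix.toEuclideanCLM (𝕜 := ℂ) ((1 : Matrix m m ℂ) ⊗ₖ Y)‖ ≤ 1 := by
    intro Y hY hYsq
    refine norm_le_one_of_unitary _ ?_
    rw [kronCT, hY, Matrix.conjTranspose_one, ← Matrix.mul_kronecker_mul, hYsq, one_mul,
      Matrix.one_kronecker_one]
  have nA1 := hu A1 hA1.eq hA1sq
  have nA2 := hu A2 hA2.eq hA2sq
  have nB1 := hv B1 hB1.eq hB1sq
  have nB2 := hv B2 hB2.eq hB2sq
  -- norm of the commutator parts
  have hCAkron : CA ⊗ₖ (1 : Matrix n n ℂ)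
      = (A2 ⊗ₖ (1 : Matrix n n ℂ)) * (A1 ⊗ₖ 1) - (A1 ⊗ₖ (1 : Matrix n n ℂ)) * (A2 ⊗ₖ 1) := by
    rw [hCA, subKron, ← Matrix.mul_kronecker_mul, ← Matrix.mul_kronecker_mul, one_mul]
  have hCBkron : (1 : Matrix m m ℂ) ⊗ₖ CB
      = ((1 : Matrix m m ℂ) ⊗ₖ B1) * (1 ⊗ₖ B2) - ((1 : Matrix m m ℂ) ⊗ₖ B2) * (1 ⊗ₖ B1) := by
    rw [hCB, kronSub, ← Matrix.mul_kronecker_mul, ← Matrix.mul_kronecker_mul, one_mul]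
  have nCA : ‖f (CA ⊗ₖ (1 : Matrix n n ℂ))‖ ≤ 2 := by
    rw [hCAkron, _root_.map_sub, _root_.map_mul, _root_.map_mul]
    calc ‖f (A2 ⊗ₖ 1) * f (A1 ⊗ₖ 1) - f (A1 ⊗ₖ 1) * f (A2 ⊗ₖ 1)‖
        ≤ ‖f (A2 ⊗ₖ 1) * f (A1 ⊗ₖ 1)‖ + ‖f (A1 ⊗ₖ 1) * f (A2 ⊗ₖ 1)‖ := norm_sub_le _ _
      _ ≤ ‖f (A2 ⊗ₖ 1)‖ * ‖f (A1 ⊗ₖ 1)‖ + ‖f (A1 ⊗ₖ 1)‖ * ‖f (A2 ⊗ₖ 1)‖ :=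
          add_le_add (norm_mul_le _ _) (norm_mul_le _ _)
      _ ≤ 2 := by nlinarith [norm_nonneg (f (A1 ⊗ₖ (1 : Matrix n n ℂ))),
          norm_nonneg (f (A2 ⊗ₖ (1 : Matrix n n ℂ)))]
  have nCB : ‖f ((1 : Matrix m m ℂ) ⊗ₖ CB)‖ ≤ 2 := by
    rw [hCBkron, _root_.map_sub, _root_.map_mul, _root_.map_mul]
    calc ‖f (1 ⊗ₖ B1) * f (1 ⊗ₖ B2) - f (1 ⊗ₖ B2) * f (1 ⊗ₖ B1)‖
        ≤ ‖f (1 ⊗ₖ B1) * f (1 ⊗ₖ B2)‖ + ‖f (1 ⊗ₖ B2) * f (1 ⊗ₖ B1)‖ := norm_sub_le _ _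
      _ ≤ ‖f (1 ⊗ₖ B1)‖ * ‖f (1 ⊗ₖ B2)‖ + ‖f (1 ⊗ₖ B2)‖ * ‖f (1 ⊗ₖ B1)‖ :=
          add_le_add (norm_mul_le _ _) (norm_mul_le _ _)
      _ ≤ 2 := by nlinarith [norm_nonneg (f ((1 : Matrix m m ℂ) ⊗ₖ B1)),
          norm_nonneg (f ((1 : Matrix m m ℂ) ⊗ₖ B2))]
  have hCsplit : CA ⊗ₖ CB = (CA ⊗ₖ (1 : Matrix n n ℂ)) * ((1 : Matrix m m ℂ) ⊗ₖ CB) := by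
    rw [← Matrix.mul_kronecker_mul, mul_one, one_mul]
  have nC : ‖f (CA ⊗ₖ CB)‖ ≤ 4 := by
    rw [hCsplit, _root_.map_mul]
    calc ‖f (CA ⊗ₖ 1) * f (1 ⊗ₖ CB)‖ ≤ ‖f (CA ⊗ₖ 1)‖ * ‖f (1 ⊗ₖ CB)‖ := norm_mul_le _ _
      _ ≤ 4 := by nlinarith [norm_nonneg (f (CA ⊗ₖ (1 : Matrix n n ℂ))),
          norm_nonneg (f ((1 : Matrix m m ℂ) ⊗ₖ CB))]
  -- norm of 1
  have h1 : ‖(1 : EuclideanSpace ℂ (m × n) →L[ℂ] EuclideanSpace ℂ (m × n))‖ ≤ 1 := by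
    rw [ContinuousLinearMap.one_def]
    exact ContinuousLinearMap.norm_id_le
  -- ‖f S‖² = ‖f (S*S)‖ ≤ 8
  have hsq : ‖f S‖ * ‖f S‖ = ‖f (S * S)‖ := by
    rw [_root_.map_mul]
    have h' : star (f S) = f S := by rw [← StarHomClass.map_star, hSstar]
    conv_lhs => rw [← CStarRing.norm_star_mul_self (x := f S), h']
  have h8 : ‖f (S * S)‖ ≤ 8 := by
    rw [key, _root_.map_add, _root_.map_add, _root_.map_add, _root_.map_add, _root_.map_one]
    set o : EuclideanSpace ℂ (m × n) →L[ℂ] EuclideanSpace ℂ (m × n) := 1 with ho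
    have e1 := norm_add_le (o + o + o + o) (f (CA ⊗ₖ CB))
    have e2 := norm_add_le (o + o + o) o
    have e3 := norm_add_le (o + o) o
    have e4 := norm_add_le o o
    have h1' : ‖o‖ ≤ 1 := h1
    linarith
  have hfin : ‖f S‖ * ‖f S‖ ≤ 8 := hsq ▸ h8
  have hsqrt2 : Real.sqrt 2 * Real.sqrt 2 = 2 := Real.mul_self_sqrt (by norm_num)
  nlinarith [norm_nonneg (f S), Real.sqrt_nonneg 2]
end

section
/- There do not exist values A_x, A_y, B_x, B_y, C_x, C_y ∈ {-1, 1} satisfying A_x·B_y·C_y = 1, A_y·B_x·C_y = 1, A_y·B_y·C_x = 1, and A_x·B_x·C_x = -1. -/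
/-- GHZ contradiction for predefined ±1 values. -/
theorem ghz_no_predefined_values :
    ¬ ∃ Ax Ay Bx By Cx Cy : ℤ,
      (Ax = -1 ∨ Ax = 1) ∧ (Ay = -1 ∨ Ay = 1) ∧
      (Bx = -1 ∨ Bx = 1) ∧ (By = -1 ∨ By = 1) ∧
      (Cx = -1 ∨ Cx = 1) ∧ (Cy = -1 ∨ Cy = 1) ∧
      Ax * By * Cy = 1 ∧ Ay * Bx * Cy = 1 ∧ Ay * By * Cx = 1 ∧
      Ax * Bx * Cx = -1 := by
  rintro ⟨Ax, Ay, Bx, By, Cx, Cy, (rfl|rfl), (rfl|rfl), (rfl|rfl), (rfl|rfl),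
    (rfl|rfl), (rfl|rfl), h1, h2, h3, h4⟩ <;> omega
end

section
/- There is no function v assigning a value in {-1,1} to each of the six observables σx and σy on each of three sites such that v respects the GHZ perfect correlations: v(A_x)v(B_y)v(C_y)=1, v(A_y)v(B_x)v(C_y)=1, v(A_y)v(B_y)v(C_x)=1, and v(A_x)v(B_x)v(C_x)=−1, where these four constraints are the eigenvalue equations satisfied by the GHZ state. -/
namespace Stmt12

/-- The six observables: one of σx, σy at each of the three sites A, B, C.
`(site, axis)` with `axis = 0` for x and `axis = 1` for y. -/
abbrev Observable := Fin 3 × Fin 2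

/-- there is no noncontextual ±1 value assignment to the six observables
respecting the GHZ perfect correlations. -/
theorem no_ghz_value_assignment :
    ¬ ∃ v : Observable → ℤ,
      (∀ o : Observable, v o = -1 ∨ v o = 1) ∧
      v (0, 0) * v (1, 1) * v (2, 1) = 1 ∧
      v (0, 1) * v (1, 0) * v (2, 1) = 1 ∧
      v (0, 1) * v (1, 1) * v (2, 0) = 1 ∧
      v (0, 0) * v (1, 0) * v (2, 0) = -1 := by
  rintro ⟨v, hv, h1, h2, h3, h4⟩
  rcases hv (0,0) with h|h <;> rcases hv (0,1) with h'|h' <;>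
    rcases hv (1,0) with a|a <;> rcases hv (1,1) with b|b <;>
    rcases hv (2,0) with c|c <;> rcases hv (2,1) with d|d <;>
    simp only [h, h', a, b, c, d] at h1 h2 h3 h4 <;> omega

end Stmt12
end

section
/- For a finitely additive probability measure p on the Boolean algebra generated by ±1-valued propositions A1, A2, B1, B2 (i.e., a joint distribution over their 16 value assignments), the correlators ⟨AiBj⟩ defined via p satisfy all eight CHSH inequalities |±⟨A1B1⟩ ± ⟨A1B2⟩ ± ⟨A2B1⟩ ± ⟨A2B2⟩| ≤ 2 where the number of minus signs is odd. -/
/-!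
For a deterministic assignment of values `±1`, write the CHSH combination as
`a₁ (s₁₁ b₁ + s₁₂ b₂) + a₂ (s₂₁ b₁ + s₂₂ b₂)`. When the product of the four signs is `-1`,
one of the two brackets vanishes and the other has absolute value at most `2`, so the
combination is bounded by `2`. The correlators of a joint distribution are the average of this
deterministic combination, and an average of quantities bounded by `2` is bounded by `2`.
-/

theorem abs_add_le_two_of_sq_eq_one {u v : ℝ} (hu : u ^ 2 = 1) (hv : v ^ 2 = 1) : |u + v| ≤ 2 :=
  abs_le_of_sq_le_sq (by nlinarith [sq_nonneg (u - v)]) zero_le_two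

theorem chsh_factors_mul_eq_zero {s11 s12 s21 s22 b1 b2 : ℝ}
    (h11 : s11 ^ 2 = 1) (h21 : s21 ^ 2 = 1) (h22 : s22 ^ 2 = 1)
    (hodd : s11 * s12 * s21 * s22 = -1) (hb1 : b1 ^ 2 = 1) (hb2 : b2 ^ 2 = 1) :
    (s11 * b1 + s12 * b2) * (s21 * b1 + s22 * b2) = 0 := by
  linear_combination s11 * s21 * hb1 + s12 * s22 * hb2 - s12 * (s22 + s21 * b1 * b2) * h11
    - s12 * s22 * s11 ^ 2 * h21 - s12 * s21 * s11 ^ 2 * b1 * b2 * h22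
    + s11 * (s21 + s22 * b1 * b2) * hodd

theorem abs_chsh_le_two {s11 s12 s21 s22 a1 a2 b1 b2 : ℝ}
    (h11 : s11 ^ 2 = 1) (h12 : s12 ^ 2 = 1) (h21 : s21 ^ 2 = 1) (h22 : s22 ^ 2 = 1)
    (hodd : s11 * s12 * s21 * s22 = -1)
    (ha1 : |a1| ≤ 1) (ha2 : |a2| ≤ 1) (hb1 : b1 ^ 2 = 1) (hb2 : b2 ^ 2 = 1) :
    |s11 * (a1 * b1) + s12 * (a1 * b2) + s21 * (a2 * b1) + s22 * (a2 * b2)| ≤ 2 := by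
  have hsplit : s11 * (a1 * b1) + s12 * (a1 * b2) + s21 * (a2 * b1) + s22 * (a2 * b2)
      = a1 * (s11 * b1 + s12 * b2) + a2 * (s21 * b1 + s22 * b2) := by ring
  have hX : |s11 * b1 + s12 * b2| ≤ 2 := by
    apply abs_add_le_two_of_sq_eq_one <;> simp only [mul_pow, *, one_mul]
  have hY : |s21 * b1 + s22 * b2| ≤ 2 := by
    apply abs_add_le_two_of_sq_eq_one <;> simp only [mul_pow, *, one_mul]
  rw [hsplit]
  rcases mul_eq_zero.mp (chsh_factors_mul_eq_zero h11 h21 h22 hodd hb1 hb2) with hX0 | hY0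
  · rw [hX0, mul_zero, zero_add, abs_mul]
    nlinarith [abs_nonneg a2, abs_nonneg (s21 * b1 + s22 * b2)]
  · rw [hY0, mul_zero, add_zero, abs_mul]
    nlinarith [abs_nonneg a1, abs_nonneg (s11 * b1 + s12 * b2)]

theorem abs_sum_mul_le_mul_sum {ι : Type*} {s : Finset ι} {f w : ι → ℝ} {C : ℝ}
    (hw : ∀ i ∈ s, 0 ≤ w i) (hf : ∀ i ∈ s, |f i| ≤ C) :
    |∑ i ∈ s, f i * w i| ≤ C * ∑ i ∈ s, w i :=
  calc |∑ i ∈ s, f i * w i| ≤ ∑ i ∈ s, |f i * w i| := Finset.abs_sum_le_sum_abs _ _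
    _ ≤ ∑ i ∈ s, C * w i := Finset.sum_le_sum fun i hi => by
        rw [abs_mul, abs_of_nonneg (hw i hi)]
        exact mul_le_mul_of_nonneg_right (hf i hi) (hw i hi)
    _ = C * ∑ i ∈ s, w i := (Finset.mul_sum _ _ _).symm

theorem abs_sum₄_mul_le_mul_sum₄ {α β γ δ : Type*} {s : Finset α} {t : Finset β}
    {u : Finset γ} {v : Finset δ} {f w : α → β → γ → δ → ℝ} {C : ℝ}
    (hw : ∀ a ∈ s, ∀ b ∈ t, ∀ c ∈ u, ∀ d ∈ v, 0 ≤ w a b c d)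
    (hf : ∀ a ∈ s, ∀ b ∈ t, ∀ c ∈ u, ∀ d ∈ v, |f a b c d| ≤ C) :
    |∑ a ∈ s, ∑ b ∈ t, ∑ c ∈ u, ∑ d ∈ v, f a b c d * w a b c d|
      ≤ C * ∑ a ∈ s, ∑ b ∈ t, ∑ c ∈ u, ∑ d ∈ v, w a b c d := by
  simpa only [Finset.sum_product] using abs_sum_mul_le_mul_sum (s := s ×ˢ t ×ˢ u ×ˢ v)
    (f := fun x => f x.1 x.2.1 x.2.2.1 x.2.2.2) (w := fun x => w x.1 x.2.1 x.2.2.1 x.2.2.2)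
    (fun x hx => by
      simp only [Finset.mem_product] at hx
      exact hw _ hx.1 _ hx.2.1 _ hx.2.2.1 _ hx.2.2.2)
    (fun x hx => by
      simp only [Finset.mem_product] at hx
      exact hf _ hx.1 _ hx.2.1 _ hx.2.2.1 _ hx.2.2.2)

/-- a joint distribution on {-1,1}^4 satisfies all eight CHSH inequalities
(with an odd number of minus signs). -/
theorem all_eight_chsh_from_joint_distribution
    (p : ℤ → ℤ → ℤ → ℤ → ℝ)
    (hpos : ∀ a1 ∈ ({-1, 1} : Finset ℤ), ∀ a2 ∈ ({-1, 1} : Finset ℤ),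
      ∀ b1 ∈ ({-1, 1} : Finset ℤ), ∀ b2 ∈ ({-1, 1} : Finset ℤ), 0 ≤ p a1 a2 b1 b2)
    (hsum : ∑ a1 ∈ ({-1, 1} : Finset ℤ), ∑ a2 ∈ ({-1, 1} : Finset ℤ),
      ∑ b1 ∈ ({-1, 1} : Finset ℤ), ∑ b2 ∈ ({-1, 1} : Finset ℤ), p a1 a2 b1 b2 = 1)
    (E : ℤ → ℤ → ℝ)
    (hE : ∀ i ∈ ({1, 2} : Finset ℤ), ∀ j ∈ ({1, 2} : Finset ℤ),
      E i j = ∑ a1 ∈ ({-1, 1} : Finset ℤ), ∑ a2 ∈ ({-1, 1} : Finset ℤ),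
        ∑ b1 ∈ ({-1, 1} : Finset ℤ), ∑ b2 ∈ ({-1, 1} : Finset ℤ),
          ((if i = 1 then a1 else a2) * (if j = 1 then b1 else b2) : ℝ) * p a1 a2 b1 b2)
    (s11 s12 s21 s22 : ℝ)
    (hs11 : s11 = -1 ∨ s11 = 1) (hs12 : s12 = -1 ∨ s12 = 1)
    (hs21 : s21 = -1 ∨ s21 = 1) (hs22 : s22 = -1 ∨ s22 = 1)
    (hodd : s11 * s12 * s21 * s22 = -1) :
    |s11 * E 1 1 + s12 * E 1 2 + s21 * E 2 1 + s22 * E 2 2| ≤ 2 := by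
  set S : Finset ℤ := {-1, 1}
  have hsign : ∀ a ∈ S, (a : ℝ) ^ 2 = 1 := by
    intro a ha
    simp only [S, Finset.mem_insert, Finset.mem_singleton] at ha
    rcases ha with rfl | rfl <;> norm_num
  have habs (a : ℤ) (ha : a ∈ S) : |(a : ℝ)| ≤ 1 :=
    (sq_le_one_iff_abs_le_one _).mp (hsign a ha).le
  have hexp : s11 * E 1 1 + s12 * E 1 2 + s21 * E 2 1 + s22 * E 2 2 =
      ∑ a1 ∈ S, ∑ a2 ∈ S, ∑ b1 ∈ S, ∑ b2 ∈ S,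
        (s11 * (a1 * b1) + s12 * (a1 * b2) + s21 * (a2 * b1) + s22 * (a2 * b2) : ℝ) *
          p a1 a2 b1 b2 := by
    rw [hE 1 (by simp) 1 (by simp), hE 1 (by simp) 2 (by simp), hE 2 (by simp) 1 (by simp),
      hE 2 (by simp) 2 (by simp)]
    simp only [if_pos, show (2 : ℤ) ≠ 1 by decide, if_false, Finset.mul_sum,
      ← Finset.sum_add_distrib]
    refine Finset.sum_congr rfl fun a1 _ => Finset.sum_congr rfl fun a2 _ =>
      Finset.sum_congr rfl fun b1 _ => Finset.sum_congr rfl fun b2 _ => ?_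
    ring
  rw [hexp]
  refine (abs_sum₄_mul_le_mul_sum₄ hpos fun a1 h1 a2 h2 b1 hb1 b2 hb2 => ?_).trans_eq
    (by rw [hsum, mul_one])
  exact abs_chsh_le_two (sq_eq_one_iff.mpr hs11.symm) (sq_eq_one_iff.mpr hs12.symm)
    (sq_eq_one_iff.mpr hs21.symm) (sq_eq_one_iff.mpr hs22.symm) hodd
    (habs a1 h1) (habs a2 h2) (hsign b1 hb1) (hsign b2 hb2)
end

section
/- If four ±1-valued quantum correlators c11, c12, c21, c22 satisfy c11 + c12 + c21 − c22 > 2, then there exists no probability measure on {-1,1}^4 whose pairwise marginals give these correlators; conversely, if all eight CHSH combinations are ≤ 2 the correlators c_ij ∈ [-1,1] do admit such a joint distribution (Fine's theorem for the 2×2 case). -/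
set_option maxHeartbeats 1000000


namespace Stmt19

/-- `p` is a joint probability distribution on {-1,1}^4 realizing the four correlators `c`. -/
def Realizes (p : ℤ → ℤ → ℤ → ℤ → ℝ) (c : ℤ → ℤ → ℝ) : Prop :=
  (∀ a1 ∈ ({-1, 1} : Finset ℤ), ∀ a2 ∈ ({-1, 1} : Finset ℤ),
    ∀ b1 ∈ ({-1, 1} : Finset ℤ), ∀ b2 ∈ ({-1, 1} : Finset ℤ), 0 ≤ p a1 a2 b1 b2) ∧
  (∑ a1 ∈ ({-1, 1} : Finset ℤ), ∑ a2 ∈ ({-1, 1} : Finset ℤ),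
    ∑ b1 ∈ ({-1, 1} : Finset ℤ), ∑ b2 ∈ ({-1, 1} : Finset ℤ), p a1 a2 b1 b2 = 1) ∧
  (∀ i ∈ ({1, 2} : Finset ℤ), ∀ j ∈ ({1, 2} : Finset ℤ),
    (∑ a1 ∈ ({-1, 1} : Finset ℤ), ∑ a2 ∈ ({-1, 1} : Finset ℤ),
      ∑ b1 ∈ ({-1, 1} : Finset ℤ), ∑ b2 ∈ ({-1, 1} : Finset ℤ),
        ((if i = 1 then a1 else a2) * (if j = 1 then b1 else b2) : ℝ) * p a1 a2 b1 b2) = c i j)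

/-- Auxiliary block distribution used in the construction. -/
noncomputable def blockP (q A B e1 e2 : ℝ) : ℝ := (q + e1*A + e2*B + e1*e2*(|A + B| - q))/16

lemma blockP_nonneg (q A B e1 e2 : ℝ) (hA : |A| ≤ q) (hB : |B| ≤ q)
    (h1 : e1 = -1 ∨ e1 = 1) (h2 : e2 = -1 ∨ e2 = 1) : 0 ≤ blockP q A B e1 e2 := by
  obtain ⟨hA1, hA2⟩ := abs_le.mp hA
  obtain ⟨hB1, hB2⟩ := abs_le.mp hB
  unfold blockP
  rcases h1 with rfl | rfl <;> rcases h2 with rfl | rfl <;>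
    rcases abs_cases (A + B) with ⟨h, h'⟩ | ⟨h, h'⟩ <;> rw [h] <;> nlinarith

/-- Fine's theorem for the 2×2 case. CHSH violation implies no joint
distribution; conversely, if all eight CHSH combinations are ≤ 2 then a joint distribution
exists. -/
theorem fine_theorem (c : ℤ → ℤ → ℝ)
    (hc : ∀ i ∈ ({1, 2} : Finset ℤ), ∀ j ∈ ({1, 2} : Finset ℤ), c i j ∈ Set.Icc (-1 : ℝ) 1) :
    (c 1 1 + c 1 2 + c 2 1 - c 2 2 > 2 → ¬ ∃ p, Realizes p c) ∧
    ((∀ s11 s12 s21 s22 : ℝ,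
        (s11 = -1 ∨ s11 = 1) → (s12 = -1 ∨ s12 = 1) →
        (s21 = -1 ∨ s21 = 1) → (s22 = -1 ∨ s22 = 1) →
        s11 * s12 * s21 * s22 = -1 →
        s11 * c 1 1 + s12 * c 1 2 + s21 * c 2 1 + s22 * c 2 2 ≤ 2) →
      ∃ p, Realizes p c) := by

  have m1 : (1:ℤ) ∈ ({1, 2} : Finset ℤ) := by decide
  have m2 : (2:ℤ) ∈ ({1, 2} : Finset ℤ) := by decide
  obtain ⟨h11l, h11u⟩ := hc 1 m1 1 m1
  obtain ⟨h12l, h12u⟩ := hc 1 m1 2 m2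
  obtain ⟨h21l, h21u⟩ := hc 2 m2 1 m1
  obtain ⟨h22l, h22u⟩ := hc 2 m2 2 m2
  constructor
  · rintro hgt ⟨p, hpos, hsum, hcor⟩
    have e11 := hcor 1 m1 1 m1
    have e12 := hcor 1 m1 2 m2
    have e21 := hcor 2 m2 1 m1
    have e22 := hcor 2 m2 2 m2
    simp only [Finset.sum_insert (by norm_num : (-1:ℤ) ∉ ({1}:Finset ℤ)),
      Finset.sum_singleton] at e11 e12 e21 e22 hsum
    norm_num at e11 e12 e21 e22
    have mn : (-1:ℤ) ∈ ({-1, 1} : Finset ℤ) := by decide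
    have mp : (1:ℤ) ∈ ({-1, 1} : Finset ℤ) := by decide
    linarith [hpos (-1) mn (-1) mn (-1) mn (-1) mn, hpos (-1) mn (-1) mn (-1) mn 1 mp,
      hpos (-1) mn (-1) mn 1 mp (-1) mn, hpos (-1) mn (-1) mn 1 mp 1 mp,
      hpos (-1) mn 1 mp (-1) mn (-1) mn, hpos (-1) mn 1 mp (-1) mn 1 mp,
      hpos (-1) mn 1 mp 1 mp (-1) mn, hpos (-1) mn 1 mp 1 mp 1 mp,
      hpos 1 mp (-1) mn (-1) mn (-1) mn, hpos 1 mp (-1) mn (-1) mn 1 mp,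
      hpos 1 mp (-1) mn 1 mp (-1) mn, hpos 1 mp (-1) mn 1 mp 1 mp,
      hpos 1 mp 1 mp (-1) mn (-1) mn, hpos 1 mp 1 mp (-1) mn 1 mp,
      hpos 1 mp 1 mp 1 mp (-1) mn, hpos 1 mp 1 mp 1 mp 1 mp]
  · intro hch
    have g1 := hch 1 (-1) 1 1 (Or.inr rfl) (Or.inl rfl) (Or.inr rfl) (Or.inr rfl) (by norm_num)
    have g2 := hch (-1) 1 1 1 (Or.inl rfl) (Or.inr rfl) (Or.inr rfl) (Or.inr rfl) (by norm_num)
    have g3 := hch 1 (-1) (-1) (-1) (Or.inr rfl) (Or.inl rfl) (Or.inl rfl) (Or.inl rfl) (by norm_num)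
    have g4 := hch (-1) 1 (-1) (-1) (Or.inl rfl) (Or.inr rfl) (Or.inl rfl) (Or.inl rfl) (by norm_num)
    have g5 := hch 1 1 1 (-1) (Or.inr rfl) (Or.inr rfl) (Or.inr rfl) (Or.inl rfl) (by norm_num)
    have g6 := hch 1 1 (-1) 1 (Or.inr rfl) (Or.inr rfl) (Or.inl rfl) (Or.inr rfl) (by norm_num)
    have g7 := hch (-1) (-1) 1 (-1) (Or.inl rfl) (Or.inl rfl) (Or.inr rfl) (Or.inl rfl) (by norm_num)
    have g8 := hch (-1) (-1) (-1) 1 (Or.inl rfl) (Or.inl rfl) (Or.inl rfl) (Or.inr rfl) (by norm_num)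
    set t : ℝ := max |c 1 1 + c 1 2| |c 2 1 + c 2 2| - 1 with ht
    have hA1 : |c 1 1 + c 1 2| ≤ 1 + t := by
      have := le_max_left |c 1 1 + c 1 2| |c 2 1 + c 2 2|; linarith
    have hA2 : |c 2 1 + c 2 2| ≤ 1 + t := by
      have := le_max_right |c 1 1 + c 1 2| |c 2 1 + c 2 2|; linarith
    have hA3 : |c 1 1 - c 1 2| ≤ 1 - t := by
      rcases max_cases |c 1 1 + c 1 2| |c 2 1 + c 2 2| with ⟨hm, _⟩ | ⟨hm, _⟩ <;>
        rw [ht, hm] <;>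
        rcases abs_cases (c 1 1 - c 1 2) with ⟨h, _⟩ | ⟨h, _⟩ <;>
        rcases abs_cases (c 1 1 + c 1 2) with ⟨h2, _⟩ | ⟨h2, _⟩ <;>
        rcases abs_cases (c 2 1 + c 2 2) with ⟨h3, _⟩ | ⟨h3, _⟩ <;>
        linarith
    have hA4 : |c 2 1 - c 2 2| ≤ 1 - t := by
      rcases max_cases |c 1 1 + c 1 2| |c 2 1 + c 2 2| with ⟨hm, _⟩ | ⟨hm, _⟩ <;>
        rw [ht, hm] <;>
        rcases abs_cases (c 2 1 - c 2 2) with ⟨h, _⟩ | ⟨h, _⟩ <;>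
        rcases abs_cases (c 1 1 + c 1 2) with ⟨h2, _⟩ | ⟨h2, _⟩ <;>
        rcases abs_cases (c 2 1 + c 2 2) with ⟨h3, _⟩ | ⟨h3, _⟩ <;>
        linarith
    refine ⟨fun a1 a2 b1 b2 =>
      blockP (1 + (b1:ℝ)*b2*t) ((b1:ℝ)*c 1 1 + (b2:ℝ)*c 1 2)
        ((b1:ℝ)*c 2 1 + (b2:ℝ)*c 2 2) (a1:ℝ) (a2:ℝ), ?_, ?_, ?_⟩
    · intro a1 ha1 a2 ha2 b1 hb1 b2 hb2
      simp only [Finset.mem_insert, Finset.mem_singleton] at ha1 ha2 hb1 hb2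
      have ea1 : (a1:ℝ) = -1 ∨ (a1:ℝ) = 1 := by
        rcases ha1 with rfl | rfl
        exacts [Or.inl (by norm_num), Or.inr (by norm_num)]
      have ea2 : (a2:ℝ) = -1 ∨ (a2:ℝ) = 1 := by
        rcases ha2 with rfl | rfl
        exacts [Or.inl (by norm_num), Or.inr (by norm_num)]
      apply blockP_nonneg _ _ _ _ _ ?_ ?_ ea1 ea2 <;>
      rcases hb1 with rfl | rfl <;> rcases hb2 with rfl | rfl <;> push_cast
      · rw [show (-1:ℝ)*c 1 1 + (-1:ℝ)*c 1 2 = -(c 1 1 + c 1 2) by ring, abs_neg]; linarith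
      · rw [show (-1:ℝ)*c 1 1 + (1:ℝ)*c 1 2 = -(c 1 1 - c 1 2) by ring, abs_neg]; linarith
      · rw [show (1:ℝ)*c 1 1 + (-1:ℝ)*c 1 2 = c 1 1 - c 1 2 by ring]; linarith
      · rw [show (1:ℝ)*c 1 1 + (1:ℝ)*c 1 2 = c 1 1 + c 1 2 by ring]; linarith
      · rw [show (-1:ℝ)*c 2 1 + (-1:ℝ)*c 2 2 = -(c 2 1 + c 2 2) by ring, abs_neg]; linarith
      · rw [show (-1:ℝ)*c 2 1 + (1:ℝ)*c 2 2 = -(c 2 1 - c 2 2) by ring, abs_neg]; linarith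
      · rw [show (1:ℝ)*c 2 1 + (-1:ℝ)*c 2 2 = c 2 1 - c 2 2 by ring]; linarith
      · rw [show (1:ℝ)*c 2 1 + (1:ℝ)*c 2 2 = c 2 1 + c 2 2 by ring]; linarith
    · simp only [Finset.sum_insert (by norm_num : (-1:ℤ) ∉ ({1}:Finset ℤ)),
        Finset.sum_singleton, blockP]
      push_cast
      ring
    · intro i hi j hj
      simp only [Finset.mem_insert, Finset.mem_singleton] at hi hj
      rcases hi with rfl | rfl <;> rcases hj with rfl | rfl <;>
      · simp only [Finset.sum_insert (by norm_num : (-1:ℤ) ∉ ({1}:Finset ℤ)),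
          Finset.sum_singleton, blockP]
        norm_num
        ring

end Stmt19
end
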